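/- arXiv:2510.25128 — 2 statements merged into one kernel-verified Lean document; each statement's English description precedes it below -/
import Mathlib

section
/- Let X, Y, Z be square-integrable random variables, let α > 0, set a = √α and b = √(1+α) − √α, and define X' = aX + bE[X|Z], Y' = aY + bE[Y|Z]. Then for any vector h, E[‖Y' − hᵀX'‖²] = α E[‖Y − hᵀX‖²] + E[‖E[Y|Z] − hᵀE[X|Z]‖²]. -/
/-!
Put `R = Y - hᵀX`. By linearity of the conditional expectation, `Y' - hᵀX' = a R + b E[R|Z]`
and `E[R|Z] = E[Y|Z] - hᵀE[X|Z]`. Pulling the `Z`-measurable factor `E[R|Z]` out of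
`E[R E[R|Z] | Z]` gives `E[R E[R|Z]] = E[E[R|Z]²]`, so expanding the square yields
`a² E[R²] + (2ab + b²) E[E[R|Z]²]`, and `a² = α`, `2ab + b² = (a + b)² - a² = 1`.
-/

open MeasureTheory

section

variable {Ω : Type*} {m m₀ : MeasurableSpace Ω} {μ : Measure Ω}

theorem integral_mul_condExp_self [IsFiniteMeasure μ] (hm : m ≤ m₀) {f : Ω → ℝ}
    (hf : MemLp f 2 μ) :
    ∫ ω, f ω * (μ[f|m]) ω ∂μ = ∫ ω, (μ[f|m]) ω ^ 2 ∂μ := by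
  have hcond : MemLp (μ[f|m]) 2 μ := hf.condExp one_le_two
  have pull : μ[μ[f|m] * f|m] =ᵐ[μ] μ[f|m] * μ[f|m] :=
    condExp_mul_of_stronglyMeasurable_left stronglyMeasurable_condExp
      (hcond.integrable_mul hf) (hf.integrable one_le_two)
  calc ∫ ω, f ω * (μ[f|m]) ω ∂μ = ∫ ω, (μ[f|m] * f) ω ∂μ := by
        simp only [Pi.mul_apply, mul_comm]
    _ = ∫ ω, (μ[μ[f|m] * f|m]) ω ∂μ := (integral_condExp hm).symm
    _ = ∫ ω, (μ[f|m]) ω ^ 2 ∂μ :=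
        integral_congr_ae (pull.trans (.of_forall fun ω => (sq _).symm))

theorem integral_sq_mul_add_mul_condExp [IsFiniteMeasure μ] (hm : m ≤ m₀) {f : Ω → ℝ}
    (hf : MemLp f 2 μ) (a b : ℝ) :
    ∫ ω, (a * f ω + b * (μ[f|m]) ω) ^ 2 ∂μ
      = a ^ 2 * ∫ ω, f ω ^ 2 ∂μ + (2 * a * b + b ^ 2) * ∫ ω, (μ[f|m]) ω ^ 2 ∂μ := by
  have hcond : MemLp (μ[f|m]) 2 μ := hf.condExp one_le_two
  have i1 : Integrable (fun ω => a ^ 2 * f ω ^ 2) μ := hf.integrable_sq.const_mul _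
  have i2 : Integrable (fun ω => 2 * a * b * (f ω * (μ[f|m]) ω)) μ :=
    (hf.integrable_mul hcond).const_mul _
  have i3 : Integrable (fun ω => b ^ 2 * (μ[f|m]) ω ^ 2) μ := hcond.integrable_sq.const_mul _
  calc ∫ ω, (a * f ω + b * (μ[f|m]) ω) ^ 2 ∂μ
      = ∫ ω, a ^ 2 * f ω ^ 2
          + (2 * a * b * (f ω * (μ[f|m]) ω) + b ^ 2 * (μ[f|m]) ω ^ 2) ∂μ := by
        congr with ω; ring
    _ = a ^ 2 * ∫ ω, f ω ^ 2 ∂μ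
          + (2 * a * b * ∫ ω, f ω * (μ[f|m]) ω ∂μ
            + b ^ 2 * ∫ ω, (μ[f|m]) ω ^ 2 ∂μ) := by
        rw [integral_add i1 (by exact i2.add i3), integral_add i2 i3,
          integral_const_mul, integral_const_mul, integral_const_mul]
    _ = _ := by rw [integral_mul_condExp_self hm hf]; ring

theorem condExp_sum_const_mul {ι : Type*} [Fintype ι] {X : ι → Ω → ℝ}
    (hX : ∀ i, Integrable (X i) μ) (c : ι → ℝ) :
    μ[fun ω => ∑ i, c i * X i ω|m] =ᵐ[μ] fun ω => ∑ i, c i * (μ[X i|m]) ω := by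
  have hsum := condExp_finsetSum (m := m) (μ := μ) (s := Finset.univ)
    (f := fun i => c i • X i) fun i _ => (hX i).smul (c i)
  have hsmul : ∀ᵐ ω ∂μ, ∀ i, (μ[c i • X i|m]) ω = c i * (μ[X i|m]) ω :=
    ae_all_iff.2 fun i => condExp_smul (c i) (X i) m
  have hfun : (fun ω => ∑ i, c i * X i ω) = ∑ i, c i • X i := by
    ext ω; simp [Finset.sum_apply]
  filter_upwards [hsum, hsmul] with ω hω hω'
  simp only [hfun, hω, Finset.sum_apply, hω']

theorem condExp_sub_sum_const_mul {ι : Type*} [Fintype ι] {Y : Ω → ℝ} {X : ι → Ω → ℝ}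
    (hY : Integrable Y μ) (hX : ∀ i, Integrable (X i) μ) (c : ι → ℝ) :
    μ[fun ω => Y ω - ∑ i, c i * X i ω|m]
      =ᵐ[μ] fun ω => (μ[Y|m]) ω - ∑ i, c i * (μ[X i|m]) ω := by
  filter_upwards
    [condExp_sub (m := m) hY (integrable_finsetSum _ fun i _ => (hX i).const_mul (c i)),
    condExp_sum_const_mul hX c] with ω hsub hsum
  change (μ[Y - fun ω => ∑ i, c i * X i ω|m]) ω = _
  rw [hsub, Pi.sub_apply, hsum]

end

theorem two_mul_sqrt_mul_add_sq {α : ℝ} (hα : 0 ≤ α) :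
    2 * √α * (√(1 + α) - √α) + (√(1 + α) - √α) ^ 2 = 1 := by
  have h1 := Real.sq_sqrt hα
  have h2 := Real.sq_sqrt (by linarith : (0:ℝ) ≤ 1 + α)
  linear_combination h2 - h1

/-- The OLS objective on IVL-transformed data `X' = aX + bE[X|Z]`, `Y' = aY + bE[Y|Z]`
(with `a = √α`, `b = √(1+α) − √α`) equals the `IVL_α` regularized objective:
`E[(Y' − hᵀX')²] = α E[(Y − hᵀX)²] + E[(E[Y|Z] − hᵀE[X|Z])²]`. -/
theorem ivl_transformed_ols {Ω : Type*} [MeasurableSpace Ω] (μ : Measure Ω)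
    [IsProbabilityMeasure μ] {𝒵 : Type*} [MeasurableSpace 𝒵]
    (m : ℕ) (X : Ω → Fin m → ℝ) (Y : Ω → ℝ) (Z : Ω → 𝒵) (hZ : Measurable Z)
    (hY : MemLp Y 2 μ) (hX : ∀ i, MemLp (fun ω => X ω i) 2 μ)
    (α : ℝ) (hα : 0 < α) (h : Fin m → ℝ) :
    let mZ := MeasurableSpace.comap Z inferInstance
    let a := Real.sqrt α
    let b := Real.sqrt (1 + α) - Real.sqrt α
    let X' : Ω → Fin m → ℝ := fun ω i => a * X ω i + b * (μ[fun ω => X ω i|mZ]) ω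
    let Y' : Ω → ℝ := fun ω => a * Y ω + b * (μ[Y|mZ]) ω
    ∫ ω, (Y' ω - ∑ i, h i * X' ω i) ^ 2 ∂μ
      = α * ∫ ω, (Y ω - ∑ i, h i * X ω i) ^ 2 ∂μ
        + ∫ ω, ((μ[Y|mZ]) ω - ∑ i, h i * (μ[fun ω => X ω i|mZ]) ω) ^ 2 ∂μ := by
  intro mZ a b X' Y'
  set R : Ω → ℝ := fun ω => Y ω - ∑ i, h i * X ω i
  set g : Ω → ℝ := fun ω => (μ[Y|mZ]) ω - ∑ i, h i * (μ[fun ω => X ω i|mZ]) ω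
  have hR : MemLp R 2 μ := hY.sub (memLp_finsetSum _ fun i _ => (hX i).const_mul (h i))
  have hcondR : μ[R|mZ] =ᵐ[μ] g := condExp_sub_sum_const_mul (X := fun i ω => X ω i)
    (hY.integrable one_le_two) (fun i => (hX i).integrable one_le_two) h
  have hresidual : ∀ ω, Y' ω - ∑ i, h i * X' ω i = a * R ω + b * g ω := by
    intro ω
    have hsum : ∑ i, h i * X' ω i
        = a * ∑ i, h i * X ω i + b * ∑ i, h i * (μ[fun ω => X ω i|mZ]) ω := by
      simp only [X', mul_add, Finset.sum_add_distrib, Finset.mul_sum, mul_left_comm]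
    simp only [Y', hsum, R, g]
    ring
  calc ∫ ω, (Y' ω - ∑ i, h i * X' ω i) ^ 2 ∂μ
      = ∫ ω, (a * R ω + b * (μ[R|mZ]) ω) ^ 2 ∂μ := by
        refine integral_congr_ae ?_
        filter_upwards [hcondR] with ω hω
        rw [hresidual, hω]
    _ = a ^ 2 * ∫ ω, R ω ^ 2 ∂μ + (2 * a * b + b ^ 2) * ∫ ω, (μ[R|mZ]) ω ^ 2 ∂μ :=
        integral_sq_mul_add_mul_condExp hZ.comap_le hR a b
    _ = α * ∫ ω, R ω ^ 2 ∂μ + ∫ ω, g ω ^ 2 ∂μ := by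
        rw [Real.sq_sqrt hα.le, two_mul_sqrt_mul_add_sq hα.le, one_mul]
        congr 1
        exact integral_congr_ae (hcondR.mono fun ω hω => congrArg (· ^ 2) hω)
end

section
/- Let X, ξ be square-integrable with X ∈ ℝ^m, ξ ∈ ℝ, let G̃ ∈ ℝ^m be a zero-mean square-integrable random vector independent of (X, ξ), let f ∈ ℝ^m satisfy fᵀG̃ = 0 almost surely, and set Y = fᵀX + ξ. Assume E[(X+G̃)(X+G̃)ᵀ] is invertible. Then the population OLS coefficient of Y on X + G̃ equals f + (E[XXᵀ] + E[G̃G̃ᵀ])^{-1} E[Xξ]. -/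
/-!
Independence together with `E[G̃] = 0` kills every cross moment between `G̃` and `(X, ξ)`, so the
augmented second-moment matrix splits as `E[(X+G̃)(X+G̃)ᵀ] = E[XXᵀ] + E[G̃G̃ᵀ]` and
`E[(X+G̃)ξ] = E[Xξ]`. Because `fᵀG̃ = 0` a.s., `Y = fᵀ(X+G̃) + ξ` is a linear model in the
augmented regressor, and for any linear model `Y = fᵀU + ξ` the population OLS coefficient is
`E[UUᵀ]⁻¹ E[UY] = f + E[UUᵀ]⁻¹ E[Uξ]`.
-/

open Matrix MeasureTheory ProbabilityTheory

section CrossMoment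

variable {Ω ι κ : Type*} [MeasurableSpace Ω] {μ : Measure Ω}

/-- The (uncentred) cross-moment matrix `E[U Vᵀ]`. -/
noncomputable def crossMoment (μ : Measure Ω) (U : Ω → ι → ℝ) (V : Ω → κ → ℝ) : Matrix ι κ ℝ :=
  Matrix.of fun i j => ∫ ω, U ω i * V ω j ∂μ

lemma crossMoment_transpose (U : Ω → ι → ℝ) (V : Ω → κ → ℝ) :
    (crossMoment μ U V)ᵀ = crossMoment μ V U := by
  ext i j
  simp only [crossMoment, transpose_apply, of_apply, mul_comm]

lemma integrable_mul_of_memLp_two {f g : Ω → ℝ} (hf : MemLp f 2 μ) (hg : MemLp g 2 μ) :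
    Integrable (fun ω => f ω * g ω) μ :=
  hf.integrable_mul hg

lemma crossMoment_add_left {U U' : Ω → ι → ℝ} {V : Ω → κ → ℝ}
    (hU : ∀ i, MemLp (fun ω => U ω i) 2 μ) (hU' : ∀ i, MemLp (fun ω => U' ω i) 2 μ)
    (hV : ∀ j, MemLp (fun ω => V ω j) 2 μ) :
    crossMoment μ (U + U') V = crossMoment μ U V + crossMoment μ U' V := by
  ext i j
  simp only [crossMoment, of_apply, Matrix.add_apply, Pi.add_apply, add_mul]
  exact integral_add (integrable_mul_of_memLp_two (hU i) (hV j))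
    (integrable_mul_of_memLp_two (hU' i) (hV j))

lemma crossMoment_add_right {U : Ω → ι → ℝ} {V V' : Ω → κ → ℝ}
    (hU : ∀ i, MemLp (fun ω => U ω i) 2 μ) (hV : ∀ j, MemLp (fun ω => V ω j) 2 μ)
    (hV' : ∀ j, MemLp (fun ω => V' ω j) 2 μ) :
    crossMoment μ U (V + V') = crossMoment μ U V + crossMoment μ U V' := by
  rw [← transpose_transpose (crossMoment μ U (V + V')), crossMoment_transpose,
    crossMoment_add_left hV hV' hU, transpose_add, crossMoment_transpose, crossMoment_transpose]

lemma integral_mul_eq_zero_of_indepFun {f g : Ω → ℝ} (hfg : IndepFun f g μ)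
    (hf : AEStronglyMeasurable f μ) (hg : AEStronglyMeasurable g μ) (hg₀ : ∫ ω, g ω ∂μ = 0) :
    ∫ ω, f ω * g ω ∂μ = 0 := by
  rw [hfg.integral_fun_mul_eq_mul_integral hf hg, hg₀, mul_zero]

lemma crossMoment_eq_zero_of_indepFun {U : Ω → ι → ℝ} {V : Ω → κ → ℝ} (hUV : IndepFun U V μ)
    (hU : ∀ i, AEStronglyMeasurable (fun ω => U ω i) μ)
    (hV : ∀ j, AEStronglyMeasurable (fun ω => V ω j) μ) (hV₀ : ∀ j, ∫ ω, V ω j ∂μ = 0) :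
    crossMoment μ U V = 0 := by
  ext i j
  exact integral_mul_eq_zero_of_indepFun
    (hUV.comp (measurable_pi_apply i) (measurable_pi_apply j)) (hU i) (hV j) (hV₀ j)

lemma crossMoment_mulVec [Fintype κ] {U : Ω → ι → ℝ} {V : Ω → κ → ℝ}
    (hU : ∀ i, MemLp (fun ω => U ω i) 2 μ) (hV : ∀ j, MemLp (fun ω => V ω j) 2 μ)
    (f : κ → ℝ) (i : ι) :
    (crossMoment μ U V *ᵥ f) i = ∫ ω, U ω i * (V ω ⬝ᵥ f) ∂μ := by
  simp only [mulVec, dotProduct, crossMoment, of_apply, Finset.mul_sum, ← mul_assoc]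
  rw [integral_finsetSum _ fun j _ => (integrable_mul_of_memLp_two (hU i) (hV j)).mul_const (f j)]
  simp only [integral_mul_const]

/-- The normal equations of the linear model `Y = Uᵀf + ξ`. -/
lemma crossMoment_response_eq [Fintype ι] {U : Ω → ι → ℝ} {ξ Y : Ω → ℝ} {f : ι → ℝ}
    (hU : ∀ i, MemLp (fun ω => U ω i) 2 μ) (hξ : MemLp ξ 2 μ)
    (hY : ∀ᵐ ω ∂μ, Y ω = U ω ⬝ᵥ f + ξ ω) :
    (fun i => ∫ ω, U ω i * Y ω ∂μ)
      = crossMoment μ U U *ᵥ f + fun i => ∫ ω, U ω i * ξ ω ∂μ := by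
  funext i
  have hUY : (fun ω => U ω i * Y ω) =ᵐ[μ] fun ω => U ω i * (U ω ⬝ᵥ f) + U ω i * ξ ω := by
    filter_upwards [hY] with ω hω
    rw [hω, mul_add]
  have hUf : MemLp (fun ω => U ω ⬝ᵥ f) 2 μ := by
    simp only [dotProduct]
    exact memLp_finsetSum _ fun j _ => (hU j).mul_const (f j)
  rw [integral_congr_ae hUY, Pi.add_apply, crossMoment_mulVec hU hU,
    integral_add (integrable_mul_of_memLp_two (hU i) hUf)
      (integrable_mul_of_memLp_two (hU i) hξ)]

lemma inv_crossMoment_mulVec_response [Fintype ι] [DecidableEq ι] {U : Ω → ι → ℝ}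
    {ξ Y : Ω → ℝ} {f : ι → ℝ}
    (hU : ∀ i, MemLp (fun ω => U ω i) 2 μ) (hξ : MemLp ξ 2 μ)
    (hY : ∀ᵐ ω ∂μ, Y ω = U ω ⬝ᵥ f + ξ ω) (hUU : IsUnit (crossMoment μ U U)) :
    (crossMoment μ U U)⁻¹ *ᵥ (fun i => ∫ ω, U ω i * Y ω ∂μ)
      = f + (crossMoment μ U U)⁻¹ *ᵥ fun i => ∫ ω, U ω i * ξ ω ∂μ := by
  rw [crossMoment_response_eq hU hξ hY, mulVec_add, mulVec_mulVec,
    nonsing_inv_mul _ ((isUnit_iff_isUnit_det _).mp hUU), one_mulVec]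

end CrossMoment

theorem da_ols_bias_general {Ω : Type*} [MeasurableSpace Ω] (μ : Measure Ω)
    (m : ℕ) (X G : Ω → Fin m → ℝ) (ξ : Ω → ℝ)
    (hX2 : ∀ i, MemLp (fun ω => X ω i) 2 μ) (hG2 : ∀ i, MemLp (fun ω => G ω i) 2 μ)
    (hξ2 : MemLp ξ 2 μ)
    (hGmean : ∀ i, ∫ ω, G ω i ∂μ = 0)
    (hindep : IndepFun (fun ω => (X ω, ξ ω)) G μ)
    (f : Fin m → ℝ) (hfG : ∀ᵐ ω ∂μ, f ⬝ᵥ G ω = 0)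
    (Y : Ω → ℝ) (hY : ∀ ω, Y ω = f ⬝ᵥ X ω + ξ ω)
    (SigX SigG B : Matrix (Fin m) (Fin m) ℝ)
    (hSigX : SigX = Matrix.of fun i j => ∫ ω, X ω i * X ω j ∂μ)
    (hSigG : SigG = Matrix.of fun i j => ∫ ω, G ω i * G ω j ∂μ)
    (hB : B = Matrix.of fun i j => ∫ ω, (X ω i + G ω i) * (X ω j + G ω j) ∂μ)
    (hBinv : IsUnit B) :
    B⁻¹ *ᵥ (fun i => ∫ ω, (X ω i + G ω i) * Y ω ∂μ)
      = f + (SigX + SigG)⁻¹ *ᵥ (fun i => ∫ ω, X ω i * ξ ω ∂μ) := by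
  have hB' : B = crossMoment μ (X + G) (X + G) := hB
  have hXG2 : ∀ i, MemLp (fun ω => (X + G) ω i) 2 μ := fun i => (hX2 i).add (hG2 i)
  have hGmeas : ∀ i, AEStronglyMeasurable (fun ω => G ω i) μ := fun i => (hG2 i).1
  have hXG : crossMoment μ X G = 0 := crossMoment_eq_zero_of_indepFun
    (hindep.comp measurable_fst measurable_id) (fun i => (hX2 i).1) hGmeas hGmean
  have hξG : ∀ i, ∫ ω, G ω i * ξ ω ∂μ = 0 := fun i => by
    simp only [mul_comm (G _ i)]
    exact integral_mul_eq_zero_of_indepFun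
      (hindep.comp measurable_snd (measurable_pi_apply i)) hξ2.1 (hGmeas i) (hGmean i)
  have hSplit : B = SigX + SigG := by
    rw [hB', crossMoment_add_left hX2 hG2 hXG2, crossMoment_add_right hX2 hX2 hG2,
      crossMoment_add_right hG2 hX2 hG2, ← crossMoment_transpose X G, hXG, hSigX, hSigG]
    simp only [transpose_zero, add_zero, zero_add]
    rfl
  have hModel : ∀ᵐ ω ∂μ, Y ω = (X + G) ω ⬝ᵥ f + ξ ω := by
    filter_upwards [hfG] with ω hω
    rw [hY, Pi.add_apply, add_dotProduct, dotProduct_comm (G ω), hω, add_zero, dotProduct_comm]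
  have hNoise : (fun i => ∫ ω, (X + G) ω i * ξ ω ∂μ) = fun i => ∫ ω, X ω i * ξ ω ∂μ := by
    funext i
    simp only [Pi.add_apply, add_mul]
    rw [integral_add (integrable_mul_of_memLp_two (hX2 i) hξ2)
      (integrable_mul_of_memLp_two (hG2 i) hξ2), hξG, add_zero]
  calc B⁻¹ *ᵥ (fun i => ∫ ω, (X ω i + G ω i) * Y ω ∂μ)
      = f + B⁻¹ *ᵥ fun i => ∫ ω, (X + G) ω i * ξ ω ∂μ := by
        rw [hB'] at hBinv ⊢
        exact inv_crossMoment_mulVec_response hXG2 hξ2 hModel hBinv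
    _ = f + (SigX + SigG)⁻¹ *ᵥ fun i => ∫ ω, X ω i * ξ ω ∂μ := by rw [hNoise, hSplit]

/-- Population OLS on outcome-invariantly augmented data `X + G̃` (with `fᵀG̃ = 0` a.s.,
`G̃` zero mean and independent of `(X, ξ)`, `Y = fᵀX + ξ`) has coefficient
`f + (E[XXᵀ] + E[G̃G̃ᵀ])⁻¹ E[Xξ]`. -/
theorem da_ols_bias {Ω : Type*} [MeasurableSpace Ω] (μ : Measure Ω)
    [IsProbabilityMeasure μ] (m : ℕ) (X G : Ω → Fin m → ℝ) (ξ : Ω → ℝ)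
    (hX2 : ∀ i, MemLp (fun ω => X ω i) 2 μ) (hG2 : ∀ i, MemLp (fun ω => G ω i) 2 μ)
    (hξ2 : MemLp ξ 2 μ)
    (hGmean : ∀ i, ∫ ω, G ω i ∂μ = 0)
    (hindep : IndepFun (fun ω => (X ω, ξ ω)) G μ)
    (f : Fin m → ℝ) (hfG : ∀ᵐ ω ∂μ, f ⬝ᵥ G ω = 0)
    (Y : Ω → ℝ) (hY : ∀ ω, Y ω = f ⬝ᵥ X ω + ξ ω)
    (SigX SigG B : Matrix (Fin m) (Fin m) ℝ)
    (hSigX : SigX = Matrix.of fun i j => ∫ ω, X ω i * X ω j ∂μ)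
    (hSigG : SigG = Matrix.of fun i j => ∫ ω, G ω i * G ω j ∂μ)
    (hB : B = Matrix.of fun i j => ∫ ω, (X ω i + G ω i) * (X ω j + G ω j) ∂μ)
    (hBinv : IsUnit B) :
    B⁻¹ *ᵥ (fun i => ∫ ω, (X ω i + G ω i) * Y ω ∂μ)
      = f + (SigX + SigG)⁻¹ *ᵥ (fun i => ∫ ω, X ω i * ξ ω ∂μ) :=
  da_ols_bias_general μ m X G ξ hX2 hG2 hξ2 hGmean hindep f hfG Y hY SigX SigG B hSigX hSigG hB
    hBinv
end
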